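/- arXiv:1208.6451 — 2 statements merged into one kernel-verified Lean document; each statement's English description precedes it below -/
import Mathlib

section
/- The period of Φ_n is 2^n; that is, the smallest positive integer t for which there exists s in {0,1}^n with Φ_n^t(s) = s equals 2^n. -/
/-- The prefix `(x₁,…,x_m)` (1-indexed) of `x ∈ {0,1}ⁿ` is alternating:
consecutive entries differ. -/
def AltPrefix (n : ℕ) (x : Fin n → Bool) (m : ℕ) : Prop :=
  ∀ j : ℕ, j + 1 < m → ∀ hn : j + 1 < n,
    x ⟨j, Nat.lt_of_succ_lt hn⟩ ≠ x ⟨j + 1, hn⟩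

instance (n : ℕ) (x : Fin n → Bool) : DecidablePred (AltPrefix n x) := fun m =>
  decidable_of_iff
    (∀ j ∈ Finset.range n, j + 1 < m → ∀ hn : j + 1 < n,
      x ⟨j, Nat.lt_of_succ_lt hn⟩ ≠ x ⟨j + 1, hn⟩)
    (by
      constructor
      · intro h j hj hn
        exact h j (Finset.mem_range.mpr (Nat.lt_of_succ_lt hn)) hj hn
      · intro h j _ hj hn
        exact h j hj hn)

/-- The largest `m ≤ n` such that the prefix `(x₁,…,x_m)` is alternating. -/
def mIdx (n : ℕ) (x : Fin n → Bool) : ℕ :=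
  Nat.findGreatest (AltPrefix n x) n

/-- The map `Φₙ : {0,1}ⁿ → {0,1}ⁿ`: with `m` the largest index such that
`(x₁,…,x_m)` is alternating, `yᵢ = 1 - x_m` for `i ≤ m` and `yᵢ = xᵢ` for `i > m`. -/
def Phi (n : ℕ) (x : Fin n → Bool) : Fin n → Bool :=
  fun i =>
    if _h : (i : ℕ) < mIdx n x then
      ! x ⟨mIdx n x - 1, by
        have h2 : mIdx n x ≤ n := Nat.findGreatest_le n
        omega⟩
    else x i

/-- The alternating vector `(…,1,0,1,0)`: `x_j = 1` iff `j ≢ n (mod 2)` (1-indexed). -/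
def altEnd0 (n : ℕ) : Fin n → Bool := fun i => decide (((i : ℕ) + 1) % 2 ≠ n % 2)

/-- The alternating vector `(…,0,1,0,1)`: `x_j = 1` iff `j ≡ n (mod 2)` (1-indexed). -/
def altEnd1 (n : ℕ) : Fin n → Bool := fun i => decide (((i : ℕ) + 1) % 2 = n % 2)

/-- The bit `c_j` (0-indexed `j`): XOR of consecutive bits `x_j, x_{j+1}`,
and for the last position the bit itself. -/
def cbit (n : ℕ) (x : Fin n → Bool) (j : Fin n) : Bool :=
  if h : (j : ℕ) + 1 < n then xor (x j) (x ⟨(j : ℕ) + 1, h⟩) else x j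

/-- The map `rₙ(x) = Σ_{j=1}^n c_j 2^{j-1}`. -/
def rmap (n : ℕ) (x : Fin n → Bool) : ℕ :=
  ∑ j : Fin n, (if cbit n x j then 1 else 0) * 2 ^ (j : ℕ)

/-- The recursively defined weights `w_{n,i,j}` (all indices 1-based; values for
indices outside `1 ≤ i, j ≤ n` are irrelevant junk). -/
def wgt : ℕ → ℕ → ℕ → ℤ
  | 0, _, _ => 0
  | 1, _, _ => -1
  | (n+2), i, j =>
    if i = n + 2 then
      (if j = n + 2 then (n : ℤ)
       else if j % 2 = (n + 2) % 2 then -1 else 1)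
    else if i = n + 1 then
      (if j = n + 2 then -1
       else if j = n + 1 then wgt (n+1) (n+1) j + 1
       else wgt (n+1) (n+1) j)
    else
      (if j = n + 2 then -1
       else if j = n + 1 then wgt (n+1) i j
       else wgt (n+1) i j + wgt n i j)

/-- The recursively defined thresholds `θ_{n,i}`. -/
def thr : ℕ → ℕ → ℤ
  | 0, _ => 0
  | 1, _ => 0
  | (n+2), i =>
    if i = n + 2 then (((n + 2) / 2 : ℕ) : ℤ)
    else if i = n + 1 then thr (n+1) (n+1)
    else thr (n+1) i + thr n i - 1

/-
Read the bits `cbit n x` (differences of consecutive entries, then the last entry) as the binary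
expansion of `rmap n x`. If the maximal alternating prefix of `x` has length `m`, then
`c₀ = ⋯ = c_{m-2} = 1`; `Φₙ` makes the first `m` entries constant, which clears these bits and flips
`c_{m-1}`, from `0` to `1` unless `m = n`. This is binary addition of `1` modulo `2ⁿ`, so `rmap`
semiconjugates `Φₙ` to `· + 1` on `ZMod (2ⁿ)`. That rotation is transitive and both sides have `2ⁿ`
elements, so `rmap` is a bijection and every orbit of `Φₙ` is a cycle of length exactly `2ⁿ`.
-/

open Function

section Rotation

variable {α : Type*} {N : ℕ} {f : α → α} {r : α → ZMod N}

theorem Function.Semiconj.apply_iterate_eq_add (hr : Semiconj r f (· + 1)) (t : ℕ) (x : α) :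
    r (f^[t] x) = r x + t := by
  rw [(hr.iterate_right t).eq, add_right_iterate_apply, nsmul_one]

theorem Function.Semiconj.injective_of_card_eq [Fintype α] [NeZero N]
    (hr : Semiconj r f (· + 1)) (hcard : Fintype.card α = N) : Injective r := by
  have : Nonempty α := Fintype.card_pos_iff.mp (hcard ▸ Nat.pos_of_neZero N)
  refine ((Fintype.bijective_iff_surjective_and_card r).mpr ⟨fun y => ?_, by simp [hcard]⟩).1
  obtain ⟨x⟩ := this
  exact ⟨f^[(y - r x).val] x, by rw [hr.apply_iterate_eq_add, ZMod.natCast_zmod_val, add_sub_cancel]⟩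

theorem Function.Semiconj.iterate_eq_self_iff_dvd (hr : Semiconj r f (· + 1)) (hinj : Injective r)
    (t : ℕ) (x : α) : f^[t] x = x ↔ N ∣ t := by
  rw [← hinj.eq_iff, hr.apply_iterate_eq_add, add_eq_left, ZMod.natCast_eq_zero_iff]

end Rotation

def bitsValue (n : ℕ) (b : Fin n → Bool) : ℕ :=
  ∑ j : Fin n, (if b j then 1 else 0) * 2 ^ (j : ℕ)

theorem sum_two_pow_lt_add_one (n k : ℕ) :
    ((∑ j : Fin n, if (j : ℕ) < k then 2 ^ (j : ℕ) else 0 : ℕ) : ZMod (2 ^ n)) + 1 = 2 ^ k := by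
  rw [Fin.sum_univ_eq_sum_range (fun j => if j < k then 2 ^ j else 0), ← Finset.sum_filter,
    Finset.range_eq_Ico, Finset.Ico_filter_lt, ← Finset.range_eq_Ico]
  have hmin : (2 : ZMod (2 ^ n)) ^ min n k = 2 ^ k := by
    rcases le_total k n with h | h
    · rw [min_eq_right h]
    · rw [min_eq_left h]
      exact_mod_cast (ZMod.natCast_pow_eq_zero_of_le 2 le_rfl).trans
        (ZMod.natCast_pow_eq_zero_of_le 2 h).symm
  push_cast
  linear_combination geom_sum_mul (2 : ZMod (2 ^ n)) (min n k) + hmin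

theorem sum_two_pow_eq (n k : ℕ) :
    ((∑ j : Fin n, if (j : ℕ) = k then 2 ^ (j : ℕ) else 0 : ℕ) : ZMod (2 ^ n)) = 2 ^ k := by
  rw [Fin.sum_univ_eq_sum_range (fun j => if j = k then 2 ^ j else 0), Finset.sum_ite_eq']
  split_ifs with h
  · push_cast; rfl
  · rw [Finset.mem_range, not_lt] at h
    exact_mod_cast (ZMod.natCast_pow_eq_zero_of_le 2 h).symm

/-- For `k ≥ n` this is the wrap-around `2ⁿ - 1 ↦ 0`. -/
theorem bitsValue_eq_add_one {n : ℕ} (b b' : Fin n → Bool) (k : ℕ)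
    (hlow : ∀ j : Fin n, (j : ℕ) < k → b j = true ∧ b' j = false)
    (hk : ∀ j : Fin n, (j : ℕ) = k → b j = false ∧ b' j = true)
    (hhigh : ∀ j : Fin n, k < j → b' j = b j) :
    (bitsValue n b' : ZMod (2 ^ n)) = bitsValue n b + 1 := by
  have hsum : bitsValue n b' + ∑ j : Fin n, (if (j : ℕ) < k then 2 ^ (j : ℕ) else 0)
      = bitsValue n b + ∑ j : Fin n, (if (j : ℕ) = k then 2 ^ (j : ℕ) else 0) := by
    simp only [bitsValue, ← Finset.sum_add_distrib]
    refine Finset.sum_congr rfl fun j _ => ?_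
    rcases lt_trichotomy (j : ℕ) k with h | h | h
    · simp [hlow j h, h, h.ne]
    · simp [hk j h, h]
    · simp [hhigh j h, h.ne', h.not_gt]
  apply_fun (Nat.cast : ℕ → ZMod (2 ^ n)) at hsum
  rw [Nat.cast_add, Nat.cast_add] at hsum
  linear_combination hsum - sum_two_pow_lt_add_one n k + sum_two_pow_eq n k

section Phi

variable {n : ℕ} (x : Fin n → Bool)

theorem mIdx_le : mIdx n x ≤ n := Nat.findGreatest_le n

theorem one_le_mIdx (hn : 0 < n) : 1 ≤ mIdx n x :=
  Nat.le_findGreatest hn fun _ hj => absurd hj (by omega)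

theorem altPrefix_mIdx : AltPrefix n x (mIdx n x) :=
  Nat.findGreatest_spec (Nat.zero_le n) fun _ hj => absurd hj (Nat.not_lt_zero _)

theorem apply_eq_of_succ_eq_mIdx {i i' : Fin n} (hi : (i : ℕ) + 1 = mIdx n x)
    (hi' : (i' : ℕ) = mIdx n x) : x i = x i' := by
  have hmax : ¬ AltPrefix n x (mIdx n x + 1) :=
    Nat.findGreatest_is_greatest (Nat.lt_succ_self _) (by omega)
  simp only [AltPrefix, not_forall, not_not] at hmax
  obtain ⟨j, hj, hjn, hxj⟩ := hmax
  have hji : j = i := by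
    by_contra hne
    exact altPrefix_mIdx x j (by omega) hjn hxj
  convert hxj using 2 <;> ext <;> simp only <;> omega

theorem Phi_apply_of_lt {i j : Fin n} (hi : (i : ℕ) + 1 = mIdx n x) (hj : (j : ℕ) < mIdx n x) :
    Phi n x j = !x i := by
  rw [Phi, dif_pos hj]
  congr 2
  ext
  simp only
  omega

theorem Phi_apply_of_le {j : Fin n} (hj : mIdx n x ≤ j) : Phi n x j = x j :=
  dif_neg (not_lt.mpr hj)

theorem cbit_of_succ_lt {y : Fin n → Bool} {j : Fin n} (h : (j : ℕ) + 1 < n) :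
    cbit n y j = xor (y j) (y ⟨j + 1, h⟩) :=
  dif_pos h

theorem cbit_of_succ_eq {y : Fin n → Bool} {j : Fin n} (h : (j : ℕ) + 1 = n) :
    cbit n y j = y j :=
  dif_neg h.not_lt

theorem cbit_of_succ_lt_mIdx {j : Fin n} (hj : (j : ℕ) + 1 < mIdx n x) : cbit n x j = true := by
  have h : (j : ℕ) + 1 < n := hj.trans_le (mIdx_le x)
  simpa [cbit_of_succ_lt h] using altPrefix_mIdx x j hj h

theorem cbit_Phi_of_succ_lt_mIdx {j : Fin n} (hj : (j : ℕ) + 1 < mIdx n x) :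
    cbit n (Phi n x) j = false := by
  have h : (j : ℕ) + 1 < n := hj.trans_le (mIdx_le x)
  let i : Fin n := ⟨mIdx n x - 1, by have := mIdx_le x; omega⟩
  have hi : (i : ℕ) + 1 = mIdx n x := by simp only [i]; omega
  rw [cbit_of_succ_lt h, Phi_apply_of_lt x (j := j) hi (by omega),
    Phi_apply_of_lt x (j := ⟨j + 1, h⟩) hi hj, Bool.xor_self]

theorem cbit_Phi_of_succ_eq_mIdx {j : Fin n} (hj : (j : ℕ) + 1 = mIdx n x) :
    cbit n (Phi n x) j = !cbit n x j := by
  rcases (hj.symm ▸ mIdx_le x : (j : ℕ) + 1 ≤ n).lt_or_eq with h | h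
  · rw [cbit_of_succ_lt h, cbit_of_succ_lt h, Phi_apply_of_lt x hj (by omega),
      Phi_apply_of_le x hj.ge, ← apply_eq_of_succ_eq_mIdx x (i' := ⟨j + 1, h⟩) hj hj]
    simp
  · rw [cbit_of_succ_eq h, cbit_of_succ_eq h, Phi_apply_of_lt x hj (by omega)]

theorem cbit_Phi_of_mIdx_le {j : Fin n} (hj : mIdx n x ≤ j) :
    cbit n (Phi n x) j = cbit n x j := by
  rcases Nat.lt_or_ge ((j : ℕ) + 1) n with h | h
  · rw [cbit_of_succ_lt h, cbit_of_succ_lt h, Phi_apply_of_le x hj,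
      Phi_apply_of_le x (by simp only; omega)]
  · rw [cbit_of_succ_eq (by omega), cbit_of_succ_eq (by omega), Phi_apply_of_le x hj]

theorem cbit_of_succ_eq_mIdx_lt {j : Fin n} (hj : (j : ℕ) + 1 = mIdx n x) (hm : mIdx n x < n) :
    cbit n x j = false := by
  rw [cbit_of_succ_lt (hj ▸ hm), apply_eq_of_succ_eq_mIdx x (i' := ⟨j + 1, hj ▸ hm⟩) hj hj,
    Bool.xor_self]

theorem semiconj_rmap_Phi (hn : 0 < n) :
    Semiconj (fun x => (rmap n x : ZMod (2 ^ n))) (Phi n) (· + 1) := by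
  intro x
  show (bitsValue n (cbit n (Phi n x)) : ZMod (2 ^ n)) = bitsValue n (cbit n x) + 1
  have hm := one_le_mIdx x hn
  let p : Fin n := ⟨mIdx n x - 1, by have := mIdx_le x; omega⟩
  have hp : (p : ℕ) + 1 = mIdx n x := by simp only [p]; omega
  cases hc : cbit n x p
  · refine bitsValue_eq_add_one _ _ p (fun j hj => ⟨cbit_of_succ_lt_mIdx x (by omega),
      cbit_Phi_of_succ_lt_mIdx x (by omega)⟩) (fun j hj => ?_)
      (fun j hj => cbit_Phi_of_mIdx_le x (by omega))
    obtain rfl : j = p := Fin.ext hj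
    rw [cbit_Phi_of_succ_eq_mIdx x hp, hc]
    exact ⟨rfl, rfl⟩
  · -- the carry runs off the top, which forces `mIdx n x = n`
    have hmn : mIdx n x = n := by
      by_contra hne
      simp [cbit_of_succ_eq_mIdx_lt x hp (lt_of_le_of_ne (mIdx_le x) hne)] at hc
    refine bitsValue_eq_add_one _ _ n (fun j _ => ?_) (fun j hj => absurd j.isLt (by omega))
      (fun j hj => absurd j.isLt (by omega))
    rcases Nat.lt_or_ge ((j : ℕ) + 1) (mIdx n x) with h | h
    · exact ⟨cbit_of_succ_lt_mIdx x h, cbit_Phi_of_succ_lt_mIdx x h⟩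
    · obtain rfl : j = p := Fin.ext (by omega)
      rw [cbit_Phi_of_succ_eq_mIdx x hp, hc]
      exact ⟨rfl, rfl⟩

end Phi

/-- The period of `Φₙ` — the smallest positive `t` such that `Φₙᵗ(s) = s`
for some `s ∈ {0,1}ⁿ` — equals `2ⁿ`. -/
theorem Phi_period (n : ℕ) (hn : 0 < n) :
    IsLeast {t : ℕ | 0 < t ∧ ∃ s : Fin n → Bool, (Phi n)^[t] s = s} (2 ^ n) := by
  have hr := semiconj_rmap_Phi hn
  have hinj := hr.injective_of_card_eq (by simp)
  refine ⟨⟨by positivity, fun _ => false, (hr.iterate_eq_self_iff_dvd hinj _ _).2 dvd_rfl⟩, ?_⟩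
  rintro t ⟨ht, s, hs⟩
  exact Nat.le_of_dvd ht ((hr.iterate_eq_self_iff_dvd hinj t s).1 hs)
end

section
/- For each fixed i with 1 ≤ i ≤ n, along the trajectory Φ_n^t(0,…,0), t = 0,…,2^n−1, the i-th bit is constant on each consecutive block of indices t of length 2^{i−1} starting at multiples of 2^{i−1}; i.e., for all t, t' with ⌊t/2^{i−1}⌋ = ⌊t'/2^{i−1}⌋, Φ_n^t(0,…,0)_i = Φ_n^{t'}(0,…,0)_i. -/
/-!
The `i`-th coordinate (0-indexed) of `Φₙᵗ(0,…,0)` is the parity of the binary digits of `t`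
in positions `≥ i`, i.e. the bit parity of `⌊t / 2ⁱ⌋`. By induction on `t`: if `t` ends in
exactly `k` binary ones, `t + 1 = 2ᵏ u` with `u` odd, then these parities alternate on the
first `k + 1` coordinates while coordinates `k` and `k + 1` agree, so `m = k + 1`. Flipping
the first `k + 1` coordinates to the negation of coordinate `k` yields the parities for
`t + 1`, and the higher coordinates are unchanged because `⌊(t + 1) / 2ʲ⌋ = ⌊t / 2ʲ⌋` for
`j > k`.
-/

def bitParity : ℕ → Bool
  | 0 => false
  | (v + 1) => xor (decide ((v + 1) % 2 = 1)) (bitParity ((v + 1) / 2))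
decreasing_by exact Nat.div_lt_self (Nat.succ_pos v) one_lt_two

lemma bitParity_eq_xor (v : ℕ) : bitParity v = xor (decide (v % 2 = 1)) (bitParity (v / 2)) := by
  cases v with
  | zero => simp [bitParity]
  | succ v => rw [bitParity]

lemma bitParity_of_mod_two_eq_zero {v : ℕ} (h : v % 2 = 0) :
    bitParity v = bitParity (v / 2) := by
  simp [bitParity_eq_xor v, h]

lemma bitParity_of_mod_two_eq_one {v : ℕ} (h : v % 2 = 1) :
    bitParity v = !bitParity (v / 2) := by
  simp [bitParity_eq_xor v, h]

lemma bitParity_two_pow_mul (a v : ℕ) : bitParity (2 ^ a * v) = bitParity v := by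
  induction a with
  | zero => simp
  | succ a ih =>
    rw [pow_succ', mul_assoc, bitParity_of_mod_two_eq_zero (by omega),
      Nat.mul_div_cancel_left _ two_pos, ih]

lemma bitParity_succ_of_mod_two_eq_zero {v : ℕ} (h : v % 2 = 0) :
    bitParity (v + 1) = !bitParity v := by
  rw [bitParity_of_mod_two_eq_one (by omega), bitParity_of_mod_two_eq_zero h]
  congr 2
  omega

def suffixParity (n t : ℕ) : Fin n → Bool := fun i => bitParity (t / 2 ^ (i : ℕ))

section TrailingOnes

variable {t k u j : ℕ}

lemma add_one_div_two_pow_of_le (htu : t + 1 = 2 ^ k * u) (hj : j ≤ k) :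
    (t + 1) / 2 ^ j = 2 ^ (k - j) * u := by
  rw [htu, ← pow_mul_pow_sub 2 hj, mul_assoc, Nat.mul_div_cancel_left _ (by positivity)]

lemma div_two_pow_add_one_of_le (htu : t + 1 = 2 ^ k * u) (hj : j ≤ k) :
    t / 2 ^ j + 1 = 2 ^ (k - j) * u := by
  rw [← Nat.succ_div_of_dvd (htu ▸ (pow_dvd_pow 2 hj).mul_right u),
    add_one_div_two_pow_of_le htu hj]

lemma add_one_div_two_pow_of_lt (hu : u % 2 = 1) (htu : t + 1 = 2 ^ k * u) (hkj : k < j) :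
    (t + 1) / 2 ^ j = t / 2 ^ j := by
  refine Nat.succ_div_of_not_dvd fun hdvd => ?_
  have h : 2 ^ k * 2 ∣ 2 ^ k * u := pow_succ 2 k ▸ htu ▸ (pow_dvd_pow 2 hkj).trans hdvd
  have := Nat.dvd_of_mul_dvd_mul_left (by positivity) h
  omega

lemma bitParity_div_two_pow_of_lt (htu : t + 1 = 2 ^ k * u) (hj : j < k) :
    bitParity (t / 2 ^ j) = !bitParity (t / 2 ^ (j + 1)) := by
  have h := div_two_pow_add_one_of_le htu hj.le
  rw [show k - j = (k - j - 1) + 1 by omega, pow_succ', mul_assoc] at h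
  rw [bitParity_of_mod_two_eq_one (by omega), Nat.div_div_eq_div_mul, ← pow_succ]

lemma div_two_pow_add_one_self (htu : t + 1 = 2 ^ k * u) : t / 2 ^ k + 1 = u := by
  simpa using div_two_pow_add_one_of_le htu le_rfl

lemma bitParity_div_two_pow_self (hu : u % 2 = 1) (htu : t + 1 = 2 ^ k * u) :
    bitParity (t / 2 ^ k) = bitParity (t / 2 ^ (k + 1)) := by
  have h := div_two_pow_add_one_self htu
  rw [bitParity_of_mod_two_eq_zero (by omega), Nat.div_div_eq_div_mul, ← pow_succ]

lemma mIdx_suffixParity {n : ℕ} (hu : u % 2 = 1) (htu : t + 1 = 2 ^ k * u) (hkn : k + 1 ≤ n) :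
    mIdx n (suffixParity n t) = k + 1 := by
  rw [mIdx, Nat.findGreatest_eq_iff]
  refine ⟨hkn, fun _ j hj _ => ?_, fun m hm hmn halt => ?_⟩
  · simp [suffixParity, bitParity_div_two_pow_of_lt htu (Nat.lt_of_succ_lt_succ hj)]
  · exact halt k (by omega) (by omega) (bitParity_div_two_pow_self hu htu)

lemma Phi_suffixParity_of_eq_two_pow_mul {n : ℕ} (hu : u % 2 = 1) (htu : t + 1 = 2 ^ k * u)
    (hlt : t + 1 < 2 ^ n) : Phi n (suffixParity n t) = suffixParity n (t + 1) := by
  have hkn : k + 1 ≤ n := by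
    have : 2 ^ k < 2 ^ n := (Nat.le_mul_of_pos_right _ (by omega)).trans_lt (htu ▸ hlt)
    exact (Nat.pow_lt_pow_iff_right (by norm_num)).mp this
  funext i
  simp only [Phi, mIdx_suffixParity hu htu hkn, Nat.add_sub_cancel, suffixParity]
  split_ifs with hik
  · have hsucc := div_two_pow_add_one_self htu
    rw [add_one_div_two_pow_of_le htu (by omega), bitParity_two_pow_mul, ← hsucc,
      bitParity_succ_of_mod_two_eq_zero (by omega)]
  · rw [add_one_div_two_pow_of_lt hu htu (by omega)]

end TrailingOnes

lemma Phi_suffixParity {n t : ℕ} (hlt : t + 1 < 2 ^ n) :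
    Phi n (suffixParity n t) = suffixParity n (t + 1) := by
  obtain ⟨k, u, hu, htu⟩ := Nat.exists_eq_pow_mul_and_not_dvd t.succ_ne_zero 2 (by norm_num)
  exact Phi_suffixParity_of_eq_two_pow_mul (by omega) htu hlt

lemma Phi_iterate_eq_suffixParity {n t : ℕ} (ht : t < 2 ^ n) :
    (Phi n)^[t] (fun _ => false) = suffixParity n t := by
  induction t with
  | zero => funext i; simp [suffixParity, bitParity]
  | succ t ih => rw [Function.iterate_succ_apply', ih (by omega), Phi_suffixParity ht]

theorem Phi_bit_blocks_general (n : ℕ) (i : Fin n) (t t' : ℕ)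
    (ht : t < 2 ^ n) (ht' : t' < 2 ^ n)
    (hblock : t / 2 ^ (i : ℕ) = t' / 2 ^ (i : ℕ)) :
    (Phi n)^[t] (fun _ => false) i = (Phi n)^[t'] (fun _ => false) i := by
  rw [Phi_iterate_eq_suffixParity ht, Phi_iterate_eq_suffixParity ht', suffixParity,
    suffixParity, hblock]

/-- Along the trajectory of `(0,…,0)`, the `i`-th bit (1-indexed `i`, here `i : Fin n`
so the block length is `2^(i : ℕ)`) is constant on each block of `2^{i-1}` consecutive
times starting at multiples of `2^{i-1}`. -/
theorem Phi_bit_blocks (n : ℕ) (hn : 0 < n) (i : Fin n) (t t' : ℕ)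
    (ht : t < 2 ^ n) (ht' : t' < 2 ^ n)
    (hblock : t / 2 ^ (i : ℕ) = t' / 2 ^ (i : ℕ)) :
    (Phi n)^[t] (fun _ => false) i = (Phi n)^[t'] (fun _ => false) i :=
  Phi_bit_blocks_general n i t t' ht ht' hblock
end
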